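/- arXiv:cs/0312037 — 9 statements merged into one kernel-verified Lean document; each statement's English description precedes it below -/
import Mathlib

section
/- Let ν : 2^W → [0,1] be a monotone set function on a finite set W with ν(∅)=0 and ν(W)=1, and let E_ν denote the Choquet expectation with respect to ν. If X and Y are comonotonic gambles (there are no w, w' with (X(w)−X(w'))(Y(w)−Y(w')) < 0), then E_ν(X + Y) = E_ν(X) + E_ν(Y). -/
/-- The Choquet expectation of a gamble `X` with respect to a set function `ν`,
computed from the sorted image `x_1 < ... < x_n` of `X` as
`x_1 + Σ_{i≥2} (x_i - x_{i-1}) ν(X > x_{i-1})`. -/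
noncomputable def choquet {W : Type*} [Fintype W] (ν : Set W → ℝ) (X : W → ℝ) : ℝ :=
  let l := (Finset.univ.image X).sort (· ≤ ·)
  l.headI + ((l.zip l.tail).map (fun p => (p.2 - p.1) * ν {w | X w > p.1})).sum

namespace Stmt7Aux

/-- Sum of a two-argument function over consecutive pairs of a list. -/
def pairSum {α : Type*} (g : α → α → ℝ) : List α → ℝ
  | [] => 0
  | [_] => 0
  | a :: b :: t => g a b + pairSum g (b :: t)

lemma pairSum_eq {α : Type*} (g : α → α → ℝ) (l : List α) :
    pairSum g l = ((l.zip l.tail).map (fun p => g p.1 p.2)).sum := by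
  induction l with
  | nil => simp [pairSum]
  | cons a t ih =>
    cases t with
    | nil => simp [pairSum]
    | cons b t' => simp [pairSum, ih]

lemma pairSum_map {α β : Type*} (g : β → β → ℝ) (f : α → β) (l : List α) :
    pairSum g (l.map f) = pairSum (fun a b => g (f a) (f b)) l := by
  induction l with
  | nil => simp [pairSum]
  | cons a t ih =>
    cases t with
    | nil => simp [pairSum]
    | cons b t' =>
      simp only [List.map_cons, pairSum] at ih ⊢
      rw [ih]

lemma dedup_headI_pairSum (g : ℝ → ℝ → ℝ) (hg : ∀ x, g x x = 0) :
    ∀ M : List ℝ, M.Pairwise (· ≤ ·) →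
      M.dedup.headI = M.headI ∧ pairSum g M.dedup = pairSum g M := by
  intro M
  induction M with
  | nil => simp
  | cons a t ih =>
    intro hs
    cases t with
    | nil => simp [pairSum]
    | cons b t' =>
      have hst : (b :: t').Pairwise (· ≤ ·) := hs.tail
      obtain ⟨ih1, ih2⟩ := ih hst
      by_cases hab : a = b
      · subst hab
        have hmem : a ∈ a :: t' := List.mem_cons_self
        rw [List.dedup_cons_of_mem hmem]
        constructor
        · rw [ih1]; rfl
        · rw [ih2]; simp [pairSum, hg]
      · have halt : a < b := lt_of_le_of_ne (List.rel_of_pairwise_cons hs List.mem_cons_self) hab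
        have hnm : a ∉ b :: t' := by
          intro hmem
          have : b ≤ a ∨ a = b := by
            rcases List.mem_cons.1 hmem with h | hmem
            · right; exact h
            · left; exact List.rel_of_pairwise_cons hst hmem
          rcases this with h | h
          · exact absurd halt (not_lt.2 h)
          · exact hab h
        rw [List.dedup_cons_of_notMem hnm]
        have hdne : (b :: t').dedup ≠ [] := by
          intro h
          have : b ∈ (b :: t').dedup := List.mem_dedup.2 List.mem_cons_self
          simp [h] at this
        obtain ⟨c, u, hcu⟩ := List.exists_cons_of_ne_nil hdne
        have hcb : c = b := by
          have := ih1
          rw [hcu] at this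
          simpa using this
        subst hcb
        constructor
        · rfl
        · rw [hcu]
          show g a c + pairSum g (c :: u) = g a c + pairSum g (c :: t')
          rw [← hcu, ih2]


lemma choquet_eq_pairSum {W : Type*} [Fintype W] (ν : Set W → ℝ) (X : W → ℝ)
    (M : List ℝ) (hM : M.Pairwise (· ≤ ·)) (hne : M ≠ [])
    (htf : M.toFinset = Finset.univ.image X) :
    choquet ν X = M.headI
      + pairSum (fun a b => (b - a) * ν {w | X w > a}) M := by
  classical
  have hdd : M.dedup = (Finset.univ.image X).sort (· ≤ ·) := by
    apply (fun hp h1 h2 => List.Perm.eq_of_pairwise' (r := ((· ≤ ·) : ℝ → ℝ → Prop)) h1 h2 hp)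
    · apply List.perm_of_nodup_nodup_toFinset_eq M.nodup_dedup (Finset.sort_nodup _ _)
      have : M.dedup.toFinset = M.toFinset := by
        ext x; simp [List.mem_toFinset, List.mem_dedup]
      rw [this, htf, Finset.sort_toFinset]
    · exact List.Pairwise.sublist (List.dedup_sublist M) hM
    · exact Finset.pairwise_sort _ _
  obtain ⟨h1, h2⟩ := dedup_headI_pairSum (fun a b => (b - a) * ν {w | X w > a})
    (by intro x; ring) M hM
  rw [choquet, ← hdd, h1, ← h2, pairSum_eq]

lemma level_eq {W : Type*} (X Y f : W → ℝ)
    (hf : ∀ a b, X a + Y a ≤ X b + Y b → f a ≤ f b)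
    (A t : List W) (u v : W)
    (hcov : ∀ w, w ∈ A ++ u :: v :: t)
    (hord : (A ++ u :: v :: t).Pairwise (fun a b => X a + Y a ≤ X b + Y b))
    (huv : f u < f v) :
    {w | f w > f u} = {w | X w + Y w > X u + Y u} := by
  have hZuv : X u + Y u < X v + Y v := by
    by_contra h
    exact absurd (hf v u (not_lt.1 h)) (not_le.2 huv)
  rw [List.pairwise_append] at hord
  have hA : ∀ a ∈ A, X a + Y a ≤ X u + Y u :=
    fun a ha => hord.2.2 a ha u List.mem_cons_self
  have htail : ∀ w, w = v ∨ w ∈ t → X v + Y v ≤ X w + Y w := by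
    intro w hw
    rcases hw with h | h
    · subst h; rfl
    · exact List.rel_of_pairwise_cons (List.pairwise_cons.1 hord.2.1).2 h
  ext w
  simp only [Set.mem_setOf_eq]
  rcases List.mem_append.1 (hcov w) with hw | hw
  · have h1 : X w + Y w ≤ X u + Y u := hA w hw
    have h2 : f w ≤ f u := hf w u h1
    constructor
    · intro h; exact absurd h (not_lt.2 h2)
    · intro h; exact absurd h (not_lt.2 h1)
  · rcases List.mem_cons.1 hw with h | hw2
    · subst h
      constructor
      · intro h; exact absurd h (lt_irrefl _)
      · intro h; exact absurd h (lt_irrefl _)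
    · have h1 : X v + Y v ≤ X w + Y w := htail w (List.mem_cons.1 hw2)
      have h2 : f v ≤ f w := hf v w h1
      exact ⟨fun _ => lt_of_lt_of_le hZuv h1, fun _ => lt_of_lt_of_le huv h2⟩

lemma sum_split {W : Type*} (X Y : W → ℝ) (ν : Set W → ℝ)
    (hX : ∀ a b, X a + Y a ≤ X b + Y b → X a ≤ X b)
    (hY : ∀ a b, X a + Y a ≤ X b + Y b → Y a ≤ Y b) :
    ∀ l A : List W, (∀ w, w ∈ A ++ l) →
      (A ++ l).Pairwise (fun a b => X a + Y a ≤ X b + Y b) →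
      pairSum (fun a b => (X b + Y b - (X a + Y a)) * ν {w | X w + Y w > X a + Y a}) l
        = pairSum (fun a b => (X b - X a) * ν {w | X w > X a}) l
          + pairSum (fun a b => (Y b - Y a) * ν {w | Y w > Y a}) l := by
  intro l
  induction l with
  | nil => intro A _ _; simp [pairSum]
  | cons u t ih =>
    intro A hcov hord
    cases t with
    | nil => simp [pairSum]
    | cons v t' =>
      have hcov' : ∀ w, w ∈ (A ++ [u]) ++ v :: t' := by
        intro w
        rw [List.append_assoc]
        exact hcov w
      have hord' : ((A ++ [u]) ++ v :: t').Pairwise (fun a b => X a + Y a ≤ X b + Y b) := by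
        rw [List.append_assoc]
        exact hord
      have step := ih (A ++ [u]) hcov' hord'
      have hpw : (u :: v :: t').Pairwise (fun a b => X a + Y a ≤ X b + Y b) :=
        (List.pairwise_append.1 hord).2.1
      have hZuv : X u + Y u ≤ X v + Y v :=
        List.rel_of_pairwise_cons hpw List.mem_cons_self
      have hxuv : X u ≤ X v := hX u v hZuv
      have hyuv : Y u ≤ Y v := hY u v hZuv
      have key :
          (X v + Y v - (X u + Y u)) * ν {w | X w + Y w > X u + Y u}
            = (X v - X u) * ν {w | X w > X u} + (Y v - Y u) * ν {w | Y w > Y u} := by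
        rcases eq_or_lt_of_le hxuv with hx | hx
        · rcases eq_or_lt_of_le hyuv with hy | hy
          · rw [← hx, ← hy]; ring
          · have hsY : {w | Y w > Y u} = {w | X w + Y w > X u + Y u} :=
              level_eq X Y Y (fun a b h => hY a b h) A t' u v hcov hord hy
            rw [hsY, ← hx]; ring
        · have hsX : {w | X w > X u} = {w | X w + Y w > X u + Y u} :=
            level_eq X Y X (fun a b h => hX a b h) A t' u v hcov hord hx
          rcases eq_or_lt_of_le hyuv with hy | hy
          · rw [hsX, ← hy]; ring
          · have hsY : {w | Y w > Y u} = {w | X w + Y w > X u + Y u} :=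
              level_eq X Y Y (fun a b h => hY a b h) A t' u v hcov hord hy
            rw [hsX, hsY]; ring
      show (X v + Y v - (X u + Y u)) * ν {w | X w + Y w > X u + Y u}
            + pairSum _ (v :: t')
          = ((X v - X u) * ν {w | X w > X u} + pairSum _ (v :: t'))
            + ((Y v - Y u) * ν {w | Y w > Y u} + pairSum _ (v :: t'))
      rw [key, step]
      ring

end Stmt7Aux

theorem stmt_7 {W : Type*} [Fintype W] [Nonempty W] (ν : Set W → ℝ)
    (hmono : ∀ U V : Set W, U ⊆ V → ν U ≤ ν V)
    (h0 : ν ∅ = 0) (h1 : ν Set.univ = 1)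
    (X Y : W → ℝ)
    (hcom : ∀ w w', (X w - X w') * (Y w - Y w') ≥ 0) :
    choquet ν (X + Y) = choquet ν X + choquet ν Y := by
  classical
  open Stmt7Aux in
  have hX : ∀ a b, X a + Y a ≤ X b + Y b → X a ≤ X b := by
    intro a b h
    by_contra hc
    push_neg at hc
    nlinarith [hcom a b]
  have hY : ∀ a b, X a + Y a ≤ X b + Y b → Y a ≤ Y b := by
    intro a b h
    by_contra hc
    push_neg at hc
    nlinarith [hcom a b]
  -- get an enumeration of W sorted by X + Y
  obtain ⟨L, hperm, hsort⟩ :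
      ∃ L : List W, L.Perm Finset.univ.toList ∧
        L.Pairwise (fun a b => X a + Y a ≤ X b + Y b) := by
    refine ⟨(Finset.univ.toList (α := W)).mergeSort
      (fun a b => decide (X a + Y a ≤ X b + Y b)), List.mergeSort_perm _ _, ?_⟩
    have := List.pairwise_mergeSort (le := fun a b => decide (X a + Y a ≤ X b + Y b))
      (fun a b c h1 h2 => by simp only [decide_eq_true_eq] at *; linarith)
      (fun a b => by simpa using le_total (X a + Y a) (X b + Y b))
      (Finset.univ.toList (α := W))
    simpa using this
  have hcov : ∀ w : W, w ∈ L := fun w =>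
    hperm.mem_iff.2 (Finset.mem_toList.2 (Finset.mem_univ w))
  have hne : L ≠ [] := by
    intro h
    obtain ⟨w⟩ := ‹Nonempty W›
    have := hcov w
    simp [h] at this
  obtain ⟨h, tL, hL⟩ := List.exists_cons_of_ne_nil hne
  have hch : ∀ f : W → ℝ, (∀ a b, X a + Y a ≤ X b + Y b → f a ≤ f b) →
      choquet ν f = f h + pairSum (fun a b => (f b - f a) * ν {w | f w > f a}) L := by
    intro f hf
    have hsorted : (L.map f).Pairwise (· ≤ ·) :=
      List.Pairwise.map f (fun {a b} hab => hf a b hab) hsort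
    have hnef : L.map f ≠ [] := by simp [hL]
    have htf : (L.map f).toFinset = Finset.univ.image f := by
      ext x
      simp only [List.mem_toFinset, List.mem_map, Finset.mem_image, Finset.mem_univ, true_and]
      exact ⟨fun ⟨a, _, ha⟩ => ⟨a, ha⟩, fun ⟨a, ha⟩ => ⟨a, hcov a, ha⟩⟩
    rw [choquet_eq_pairSum ν f (L.map f) hsorted hnef htf, pairSum_map]
    congr 1
    rw [hL]
    simp
  have hchZ := hch (fun w => X w + Y w) (fun a b hab => hab)
  have hchX := hch X hX
  have hchY := hch Y hY
  have hsum := sum_split X Y ν hX hY L [] (by simpa using hcov) (by simpa using hsort)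
  have : choquet ν (X + Y) = choquet ν (fun w => X w + Y w) := rfl
  rw [this, hchZ, hchX, hchY, hsum]
  ring
end

section
/- Let E be a functional on gambles over a finite set W that satisfies comonotonic additivity (E(X+Y)=E(X)+E(Y) for comonotonic X, Y) and positive affine homogeneity (E(aX + b·1) = aE(X) + b for a ≥ 0). Then for nested sets U_1 ⊇ U_2 ⊇ ... ⊇ U_n and nonnegative reals a_1,...,a_n, E(a_1·1_{U_1} + ... + a_n·1_{U_n}) = a_1 E(1_{U_1}) + ... + a_n E(1_{U_n}). -/
theorem stmt_8 {W : Type*} [Fintype W] [Nonempty W] (E : (W → ℝ) → ℝ)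
    (hcomon : ∀ X Y : W → ℝ,
      (∀ w w', (X w - X w') * (Y w - Y w') ≥ 0) → E (X + Y) = E X + E Y)
    (haff : ∀ (X : W → ℝ) (a b : ℝ), 0 ≤ a → E (fun w => a * X w + b) = a * E X + b)
    (n : ℕ) (U : Fin n → Set W) (hU : ∀ i j, i ≤ j → U j ⊆ U i)
    (a : Fin n → ℝ) (ha : ∀ i, 0 ≤ a i) :
    E (fun w => ∑ i, a i * Set.indicator (U i) (fun _ => (1 : ℝ)) w) =
      ∑ i, a i * E (Set.indicator (U i) (fun _ => (1 : ℝ))) := by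
  induction n with
  | zero =>
      simp only [Finset.univ_eq_empty, Finset.sum_empty]
      have h := haff (fun _ => 0) 0 0 le_rfl
      simpa using h
  | succ n ih =>
      set f : W → ℝ := fun w => a 0 * Set.indicator (U 0) (fun _ => (1:ℝ)) w with hf_def
      set g : W → ℝ :=
        fun w => ∑ i : Fin n, a i.succ * Set.indicator (U i.succ) (fun _ => (1:ℝ)) w with hg_def
      have hgnn : ∀ w, 0 ≤ g w := fun w =>
        Finset.sum_nonneg fun i _ =>
          mul_nonneg (ha _) (Set.indicator_nonneg (fun _ _ => zero_le_one) _)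
      have hgzero : ∀ w, w ∉ U 0 → g w = 0 := by
        intro w hw
        apply Finset.sum_eq_zero
        intro i _
        have : w ∉ U i.succ := fun h => hw (hU 0 i.succ (Fin.zero_le _) h)
        simp [this]
      have hmono : ∀ w w', (f w - f w') * (g w - g w') ≥ 0 := by
        intro w w'
        by_cases hw : w ∈ U 0 <;> by_cases hw' : w' ∈ U 0
        · simp [hf_def, hw, hw']
        · have h1 : f w - f w' = a 0 := by simp [hf_def, hw, hw']
          rw [h1, hgzero w' hw']
          have := hgnn w
          exact mul_nonneg (ha 0) (by linarith)
        · have h1 : f w - f w' = -(a 0) := by simp [hf_def, hw, hw']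
          rw [h1, hgzero w hw]
          have := hgnn w'
          nlinarith [ha 0]
        · simp [hf_def, hw, hw']
      have hadd : E (f + g) = E f + E g := hcomon f g hmono
      have hEf : E f = a 0 * E (Set.indicator (U 0) (fun _ => (1:ℝ))) := by
        have h := haff (Set.indicator (U 0) (fun _ => (1:ℝ))) (a 0) 0 (ha 0)
        simpa [hf_def] using h
      have hEg : E g = ∑ i : Fin n, a i.succ * E (Set.indicator (U i.succ) (fun _ => (1:ℝ))) := by
        exact ih (fun i => U i.succ)
          (fun i j hij => hU i.succ j.succ (Fin.succ_le_succ_iff.mpr hij))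
          (fun i => a i.succ) (fun i => ha i.succ)
      calc E (fun w => ∑ i, a i * Set.indicator (U i) (fun _ => (1:ℝ)) w)
          = E (f + g) := by
            congr 1
            funext w
            simp [hf_def, hg_def, Fin.sum_univ_succ, Pi.add_apply]
        _ = E f + E g := hadd
        _ = ∑ i, a i * E (Set.indicator (U i) (fun _ => (1:ℝ))) := by
            rw [hEf, hEg, Fin.sum_univ_succ]
end

section
/- Suppose E is a functional on gambles over a finite set W that is positively affinely homogeneous (E(aX+b·1)=aE(X)+b for a ≥ 0), monotone (X ≤ Y pointwise implies E(X) ≤ E(Y)), comonotonically additive, and satisfies the inclusion-exclusion inequality E(X_1 ∨ ... ∨ X_n) ≥ Σ_{∅≠I⊆{1,...,n}} (−1)^{|I|+1} E(∧_{j∈I} X_j) for all gambles X_1,...,X_n, where ∨ and ∧ are pointwise max and min. Then there is a unique belief function Bel on W such that E is the Choquet expectation with respect to Bel. -/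
open Classical in
noncomputable def bfInd {W : Type*} (U : Set W) : W → ℝ := fun w => if w ∈ U then 1 else 0

lemma bfInd_nonneg {W : Type*} (U : Set W) (w : W) : 0 ≤ bfInd U w := by
  unfold bfInd; split <;> norm_num

lemma bfInd_le_one {W : Type*} (U : Set W) (w : W) : bfInd U w ≤ 1 := by
  unfold bfInd; split <;> norm_num

lemma bfInd_of_mem {W : Type*} {U : Set W} {w : W} (h : w ∈ U) : bfInd U w = 1 := by
  simp [bfInd, h]

lemma bfInd_of_not_mem {W : Type*} {U : Set W} {w : W} (h : w ∉ U) : bfInd U w = 0 := by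
  simp [bfInd, h]

lemma choquet_eq {W : Type*} [Fintype W] (ν : Set W → ℝ) (X : W → ℝ) :
    choquet ν X =
      ((Finset.univ.image X).sort (· ≤ ·)).headI +
      ((((Finset.univ.image X).sort (· ≤ ·)).zip ((Finset.univ.image X).sort (· ≤ ·)).tail).map
        (fun p => (p.2 - p.1) * ν {w | X w > p.1})).sum := rfl

lemma pair_lt_of_sorted : ∀ {l : List ℝ}, l.Pairwise (· < ·) → ∀ p ∈ l.zip l.tail, p.1 < p.2 := by
  intro l
  induction l with
  | nil => simp
  | cons a t ih =>
    intro hs p hp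
    cases t with
    | nil => simp at hp
    | cons b t' =>
      simp only [List.tail_cons, List.zip_cons_cons, List.mem_cons] at hp
      rcases hp with rfl | hp
      · exact (List.pairwise_cons.mp hs).1 b (List.mem_cons_self)
      · exact ih (List.pairwise_cons.mp hs).2 p hp

lemma sum_indicator_zero (c : ℝ) (l : List ℝ) (h : ∀ x ∈ l, c ≤ x) :
    ((l.zip l.tail).map (fun p => (p.2 - p.1) * (if p.1 < c then (1:ℝ) else 0))).sum = 0 := by
  apply List.sum_eq_zero
  intro x hx
  obtain ⟨p, hp, rfl⟩ := List.mem_map.mp hx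
  rw [if_neg (not_lt.mpr (h p.1 (List.of_mem_zip hp).1)), mul_zero]

lemma bf_telescope : ∀ (l : List ℝ), l.Pairwise (· < ·) → ∀ c ∈ l,
    l.headI + ((l.zip l.tail).map (fun p => (p.2 - p.1) * (if p.1 < c then (1:ℝ) else 0))).sum = c := by
  intro l
  induction l with
  | nil => simp
  | cons a t ih =>
    intro hs c hc
    cases t with
    | nil =>
      simp only [List.mem_singleton] at hc
      simp [hc]
    | cons b t' =>
      rcases List.mem_cons.mp hc with rfl | hc'
      · have h1 : ∀ x ∈ b :: t', c ≤ x := fun x hx => le_of_lt ((List.pairwise_cons.mp hs).1 x hx)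
        have h2 := sum_indicator_zero c (b :: t') h1
        simp only [List.tail_cons, List.zip_cons_cons, List.map_cons, List.sum_cons,
          List.headI] at h2 ⊢
        rw [if_neg (lt_irrefl c), mul_zero]
        linarith
      · have hlt : a < c := (List.pairwise_cons.mp hs).1 c hc'
        have h2 := ih (List.pairwise_cons.mp hs).2 c hc'
        simp only [List.tail_cons, List.zip_cons_cons, List.map_cons, List.sum_cons,
          List.headI] at h2 ⊢
        rw [if_pos hlt, mul_one]
        linarith

lemma bf_list_sum_apply {W : Type*} (L : List (W → ℝ)) (w : W) :
    L.sum w = (L.map (fun f => f w)).sum := by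
  induction L with
  | nil => simp
  | cons f t ih => simp [ih]

def MonoWrt {W : Type*} (X : W → ℝ) (f : W → ℝ) : Prop := ∀ w w', X w ≤ X w' → f w ≤ f w'

lemma monoWrt_sum {W : Type*} {X : W → ℝ} :
    ∀ {L : List (W → ℝ)}, (∀ f ∈ L, MonoWrt X f) → MonoWrt X L.sum := by
  intro L
  induction L with
  | nil => intro _ w w' _; simp
  | cons f t ih =>
    intro h w w' hw
    have h1 := h f (List.mem_cons_self) w w' hw
    have h2 := ih (fun g hg => h g (List.mem_cons_of_mem f hg)) w w' hw
    simpa using add_le_add h1 h2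

lemma E_list_sum {W : Type*} (E : (W → ℝ) → ℝ)
    (hzero : E 0 = 0)
    (hcomon : ∀ X Y : W → ℝ, (∀ w w', (X w - X w') * (Y w - Y w') ≥ 0) → E (X + Y) = E X + E Y)
    (X : W → ℝ) :
    ∀ (L : List (W → ℝ)), (∀ f ∈ L, MonoWrt X f) → E L.sum = (L.map E).sum := by
  intro L
  induction L with
  | nil => intro _; simpa using hzero
  | cons f t ih =>
    intro h
    have hf := h f (List.mem_cons_self)
    have ht : ∀ g ∈ t, MonoWrt X g := fun g hg => h g (List.mem_cons_of_mem f hg)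
    have hts := monoWrt_sum ht
    have hc : ∀ w w', (f w - f w') * (t.sum w - t.sum w') ≥ 0 := by
      intro w w'
      rcases le_total (X w) (X w') with hw | hw
      · nlinarith [mul_nonneg (sub_nonneg.mpr (hf w w' hw)) (sub_nonneg.mpr (hts w w' hw))]
      · nlinarith [mul_nonneg (sub_nonneg.mpr (hf w' w hw)) (sub_nonneg.mpr (hts w' w hw))]
    rw [List.sum_cons, hcomon f t.sum hc, ih ht, List.map_cons, List.sum_cons]

lemma sort_pair {a b : ℝ} (hab : a < b) : ({a, b} : Finset ℝ).sort (· ≤ ·) = [a, b] := by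
  have hs := (Finset.sortedLT_sort ({a, b} : Finset ℝ)).pairwise
  have hlen : (({a, b} : Finset ℝ).sort (· ≤ ·)).length = 2 := by
    rw [Finset.length_sort, Finset.card_insert_of_notMem (by simp [ne_of_lt hab]),
      Finset.card_singleton]
  obtain ⟨x, y, hxy⟩ := List.length_eq_two.mp hlen
  have hma : a ∈ ({a, b} : Finset ℝ).sort (· ≤ ·) := (Finset.mem_sort _).mpr (by simp)
  have hmb : b ∈ ({a, b} : Finset ℝ).sort (· ≤ ·) := (Finset.mem_sort _).mpr (by simp)
  rw [hxy] at hma hmb hs ⊢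
  have hxy' : x < y := by
    simp only [List.pairwise_cons] at hs
    exact hs.1 y (List.mem_singleton.mpr rfl)
  simp only [List.mem_cons, List.mem_singleton, List.not_mem_nil, or_false] at hma hmb
  rcases hma with rfl | rfl <;> rcases hmb with rfl | rfl
  · exact absurd rfl (ne_of_lt hab)
  · rfl
  · exact absurd (hab.trans hxy') (lt_irrefl _)
  · exact absurd rfl (ne_of_lt hab)
theorem stmt_9 {W : Type*} [Fintype W] [Nonempty W] (E : (W → ℝ) → ℝ)
    (haff : ∀ (X : W → ℝ) (a b : ℝ), 0 ≤ a → E (fun w => a * X w + b) = a * E X + b)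
    (hmono : ∀ X Y : W → ℝ, (∀ w, X w ≤ Y w) → E X ≤ E Y)
    (hcomon : ∀ X Y : W → ℝ,
      (∀ w w', (X w - X w') * (Y w - Y w') ≥ 0) → E (X + Y) = E X + E Y)
    (hie : ∀ (n : ℕ) (X : Fin (n + 1) → W → ℝ),
      E (fun w => Finset.univ.sup' Finset.univ_nonempty (fun i => X i w)) ≥
        ∑ I : Finset (Fin (n + 1)),
          if h : I.Nonempty then
            (-1 : ℝ) ^ (I.card + 1) * E (fun w => I.inf' h (fun j => X j w))
          else 0) :
    ∃! Bel : Set W → ℝ,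
      (Bel ∅ = 0 ∧ Bel Set.univ = 1 ∧ (∀ U, 0 ≤ Bel U ∧ Bel U ≤ 1) ∧
        (∀ (n : ℕ) (U : Fin n → Set W),
          Bel (⋃ i, U i) ≥ ∑ I : Finset (Fin n),
            if I.Nonempty then (-1 : ℝ) ^ (I.card + 1) * Bel (⋂ j ∈ I, U j) else 0)) ∧
      ∀ X : W → ℝ, E X = choquet Bel X := by
  classical
  have hEconst : ∀ b : ℝ, E (fun _ => b) = b := by
    intro b
    have h := haff (fun _ => 0) 0 b le_rfl
    simpa using h
  have hEzero : E 0 = 0 := hEconst 0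
  -- the candidate belief function
  set Bel : Set W → ℝ := fun U => E (bfInd U) with hBelDef
  have hBelEmpty : Bel ∅ = 0 := by
    have : bfInd (∅ : Set W) = fun _ => (0 : ℝ) := by
      funext w; exact bfInd_of_not_mem (Set.notMem_empty w)
    simp only [hBelDef, this, hEconst]
  have hBelUniv : Bel Set.univ = 1 := by
    have : bfInd (Set.univ : Set W) = fun _ => (1 : ℝ) := by
      funext w; exact bfInd_of_mem (Set.mem_univ w)
    simp only [hBelDef, this, hEconst]
  have hBelBounds : ∀ U : Set W, 0 ≤ Bel U ∧ Bel U ≤ 1 := by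
    intro U
    constructor
    · have h := hmono (fun _ => 0) (bfInd U) (fun w => bfInd_nonneg U w)
      rwa [hEconst 0] at h
    · have h := hmono (bfInd U) (fun _ => 1) (fun w => bfInd_le_one U w)
      rwa [hEconst 1] at h
  -- the representation: E X = choquet Bel X
  have hrep : ∀ X : W → ℝ, E X = choquet Bel X := by
    intro X
    set l := (Finset.univ.image X).sort (· ≤ ·) with hl
    have hsort : l.Pairwise (· < ·) := (Finset.sortedLT_sort _).pairwise
    have hmem : ∀ w, X w ∈ l := fun w =>
      (Finset.mem_sort _).mpr (Finset.mem_image_of_mem X (Finset.mem_univ w))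
    set pairs := l.zip l.tail with hpairs
    have hplt : ∀ p ∈ pairs, p.1 < p.2 := pair_lt_of_sorted hsort
    set L : List (W → ℝ) :=
      pairs.map (fun p => fun w => (p.2 - p.1) * bfInd {w' | X w' > p.1} w) with hL
    have hmonoL : ∀ f ∈ L, MonoWrt X f := by
      intro f hf
      obtain ⟨p, hp, rfl⟩ := List.mem_map.mp hf
      intro w w' hw
      apply mul_le_mul_of_nonneg_left _ (le_of_lt (sub_pos.mpr (hplt p hp)))
      by_cases h1 : X w > p.1
      · rw [bfInd_of_mem (show w ∈ {w' | X w' > p.1} from h1),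
          bfInd_of_mem (show w' ∈ {w'' | X w'' > p.1} from lt_of_lt_of_le h1 hw)]
      · rw [bfInd_of_not_mem (show w ∉ {w' | X w' > p.1} from h1)]
        exact bfInd_nonneg _ _
    have hX : X = fun w => 1 * (L.sum w) + l.headI := by
      funext w
      have ht := bf_telescope l hsort (X w) (hmem w)
      rw [bf_list_sum_apply, one_mul, hL, List.map_map]
      have hmc : (pairs.map ((fun f => f w) ∘
            fun p => fun w => (p.2 - p.1) * bfInd {w' | X w' > p.1} w)) =
          pairs.map (fun p => (p.2 - p.1) * (if p.1 < X w then (1 : ℝ) else 0)) := by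
        apply List.map_congr_left
        intro p hp
        simp only [Function.comp_apply]
        by_cases h1 : p.1 < X w
        · rw [bfInd_of_mem (show w ∈ {w' | X w' > p.1} from h1), if_pos h1]
        · rw [bfInd_of_not_mem (show w ∉ {w' | X w' > p.1} from h1), if_neg h1]
      rw [hmc]
      linarith
    have hEL : E L.sum = (L.map E).sum := E_list_sum E hEzero hcomon X L hmonoL
    calc E X = E (fun w => 1 * L.sum w + l.headI) := by rw [← hX]
      _ = 1 * E L.sum + l.headI := haff L.sum 1 l.headI zero_le_one
      _ = (L.map E).sum + l.headI := by rw [hEL]; ring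
      _ = choquet Bel X := by
        have hLE : L.map E = pairs.map (fun p => (p.2 - p.1) * Bel {w | X w > p.1}) := by
          rw [hL, List.map_map]
          apply List.map_congr_left
          intro p hp
          have h := haff (bfInd {w' | X w' > p.1}) (p.2 - p.1) 0
            (le_of_lt (sub_pos.mpr (hplt p hp)))
          simp only [add_zero] at h
          simpa [Function.comp] using h
        rw [choquet_eq, ← hl, ← hpairs, ← hLE]
        ring
  -- superadditivity (inclusion-exclusion inequality)
  have hsup : ∀ (n : ℕ) (U : Fin n → Set W),
      Bel (⋃ i, U i) ≥ ∑ I : Finset (Fin n),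
        if I.Nonempty then (-1 : ℝ) ^ (I.card + 1) * Bel (⋂ j ∈ I, U j) else 0 := by
    intro n U
    cases n with
    | zero =>
      have h1 : (⋃ i : Fin 0, U i) = ∅ := by simp
      have h2 : (∑ I : Finset (Fin 0),
          if I.Nonempty then (-1 : ℝ) ^ (I.card + 1) * Bel (⋂ j ∈ I, U j) else 0) = 0 := by
        apply Finset.sum_eq_zero
        intro I _
        rw [if_neg]
        simp [Finset.eq_empty_of_isEmpty I]
      rw [h1, h2, hBelEmpty]
    | succ m =>
      have key := hie m (fun i => bfInd (U i))
      have hsupind : (fun w => Finset.univ.sup' Finset.univ_nonempty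
          (fun i => bfInd (U i) w)) = bfInd (⋃ i, U i) := by
        funext w
        by_cases hw : w ∈ ⋃ i, U i
        · obtain ⟨i, hi⟩ := Set.mem_iUnion.mp hw
          rw [bfInd_of_mem hw]
          apply le_antisymm
          · exact Finset.sup'_le _ _ (fun j _ => bfInd_le_one _ _)
          · have h1 := Finset.le_sup' (fun i => bfInd (U i) w) (Finset.mem_univ i)
            rw [bfInd_of_mem hi] at h1
            exact h1
        · rw [bfInd_of_not_mem hw]
          have hz : ∀ j, bfInd (U j) w = 0 :=
            fun j => bfInd_of_not_mem (fun hj => hw (Set.mem_iUnion.mpr ⟨j, hj⟩))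
          apply le_antisymm
          · exact Finset.sup'_le _ _ (fun j _ => le_of_eq (hz j))
          · have h1 := Finset.le_sup' (fun i => bfInd (U i) w)
              (Finset.mem_univ (0 : Fin (m + 1)))
            rw [hz 0] at h1
            exact h1
      rw [hsupind] at key
      refine le_trans (le_of_eq ?_) key
      apply Finset.sum_congr rfl
      intro I _
      by_cases h : I.Nonempty
      · rw [if_pos h, dif_pos h]
        congr 1
        show E (bfInd (⋂ j ∈ I, U j)) = E (fun w => I.inf' h fun j => bfInd (U j) w)
        congr 1
        funext w
        by_cases hw : w ∈ ⋂ j ∈ I, U j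
        · rw [bfInd_of_mem hw]
          have hall : ∀ j ∈ I, bfInd (U j) w = 1 :=
            fun j hj => bfInd_of_mem (Set.mem_iInter₂.mp hw j hj)
          apply le_antisymm
          · exact Finset.le_inf' h _ (fun j hj => (hall j hj).ge)
          · obtain ⟨j, hj⟩ := h
            have h1 := Finset.inf'_le (fun j => bfInd (U j) w) hj
            rw [hall j hj] at h1
            exact h1
        · rw [bfInd_of_not_mem hw]
          have hex0 : ∃ j ∈ I, w ∉ U j := by
            by_contra hcon
            push_neg at hcon
            exact hw (Set.mem_iInter₂.mpr hcon)
          obtain ⟨j0, hj0, hwj0⟩ := hex0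
          apply le_antisymm
          · exact Finset.le_inf' h _ (fun j _ => bfInd_nonneg _ _)
          · have h1 := Finset.inf'_le (fun j => bfInd (U j) w) hj0
            rw [bfInd_of_not_mem hwj0] at h1
            exact h1
      · rw [if_neg h, dif_neg h]
  refine ⟨Bel, ⟨⟨hBelEmpty, hBelUniv, hBelBounds, hsup⟩, hrep⟩, ?_⟩
  rintro Bel' ⟨⟨h0, h1, _, _⟩, hrep'⟩
  funext U
  have hEU : E (bfInd U) = choquet Bel' (bfInd U) := hrep' (bfInd U)
  have hch : choquet Bel' (bfInd U) = Bel' U := by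
    by_cases hex : ∃ w, w ∈ U
    · by_cases hall : ∀ w, w ∈ U
      · have hUuniv : U = Set.univ := Set.eq_univ_iff_forall.mpr hall
        have hIm : Finset.univ.image (bfInd U) = ({1} : Finset ℝ) := by
          have : bfInd U = fun _ => (1 : ℝ) := funext fun w => bfInd_of_mem (hall w)
          rw [this, Finset.image_const Finset.univ_nonempty]
        rw [choquet_eq, hIm, Finset.sort_singleton, hUuniv, h1]
        simp
      · push_neg at hall
        obtain ⟨w1, hw1⟩ := hex
        obtain ⟨w0, hw0⟩ := hall
        have hIm : Finset.univ.image (bfInd U) = ({0, 1} : Finset ℝ) := by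
          apply Finset.ext
          intro x
          simp only [Finset.mem_image, Finset.mem_univ, true_and, Finset.mem_insert,
            Finset.mem_singleton]
          constructor
          · rintro ⟨w, rfl⟩
            by_cases h : w ∈ U
            · right; exact bfInd_of_mem h
            · left; exact bfInd_of_not_mem h
          · rintro (rfl | rfl)
            · exact ⟨w0, bfInd_of_not_mem hw0⟩
            · exact ⟨w1, bfInd_of_mem hw1⟩
        have hset : {w | bfInd U w > 0} = U := by
          ext w
          by_cases h : w ∈ U <;> simp [Set.mem_setOf_eq, bfInd_of_mem, bfInd_of_not_mem, h]
        rw [choquet_eq, hIm, sort_pair zero_lt_one]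
        simp only [List.headI, List.tail_cons, List.zip_cons_cons, List.zip_nil_right,
          List.map_cons, List.map_nil, List.sum_cons, List.sum_nil]
        rw [hset]
        ring
    · push_neg at hex
      have hUempty : U = ∅ := Set.eq_empty_iff_forall_notMem.mpr hex
      have hIm : Finset.univ.image (bfInd U) = ({0} : Finset ℝ) := by
        have : bfInd U = fun _ => (0 : ℝ) := funext fun w => bfInd_of_not_mem (hex w)
        rw [this, Finset.image_const Finset.univ_nonempty]
      rw [choquet_eq, hIm, Finset.sort_singleton, hUempty, h0]
      simp
  show Bel' U = E (bfInd U)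
  rw [hEU, hch]
end

section
/- Suppose E is a functional on gambles over a finite set W that is positively affinely homogeneous, monotone, comonotonically additive, and satisfies the max property E(1_{U∪V}) = max(E(1_U), E(1_V)) for all U, V ⊆ W. Then there is a unique possibility measure Poss on W such that E equals the Choquet expectation with respect to Poss. -/
private lemma sort_eq_of_sorted_lt {l : List ℝ} {s : Finset ℝ}
    (h : l.Pairwise (· < ·)) (hs : l.toFinset = s) :
    s.sort (· ≤ ·) = l := by
  refine List.Perm.eq_of_pairwise' (Finset.pairwise_sort _ _) (h.imp fun hab => le_of_lt hab) ?_
  refine List.perm_of_nodup_nodup_toFinset_eq (Finset.sort_nodup _ _) h.nodup ?_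
  rw [Finset.sort_toFinset, hs]

private lemma key {W : Type*} [Fintype W] [Nonempty W] (E : (W → ℝ) → ℝ)
    (haff : ∀ (X : W → ℝ) (a b : ℝ), 0 ≤ a → E (fun w => a * X w + b) = a * E X + b)
    (hcomon : ∀ X Y : W → ℝ,
      (∀ w w', (X w - X w') * (Y w - Y w') ≥ 0) → E (X + Y) = E X + E Y) :
    ∀ l : List ℝ, l.Pairwise (· < ·) → ∀ X : W → ℝ, (∀ w, X w ∈ l) →
      (∀ x ∈ l, ∃ w, X w = x) →
      E X = l.headI + ((l.zip l.tail).map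
        (fun p => (p.2 - p.1) * E (Set.indicator {w | X w > p.1} (fun _ => 1)))).sum := by
  intro l
  induction l with
  | nil =>
    intro _ X hmem _
    exact absurd (hmem (Classical.arbitrary W)) List.not_mem_nil
  | cons x₁ l' ih =>
    intro hsort X hmem hsurj
    cases l' with
    | nil =>
      have hX : X = fun _ => x₁ := funext fun w => by simpa using hmem w
      have h0 := haff X 0 x₁ le_rfl
      simp only [zero_mul, zero_add] at h0
      simp [hX, h0]
    | cons x₂ rest =>
      rw [List.pairwise_cons] at hsort
      obtain ⟨hx₁, hsort'⟩ := hsort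
      have h12 : x₁ < x₂ := hx₁ x₂ (List.mem_cons_self)
      have hge : ∀ y ∈ x₂ :: rest, x₂ ≤ y := by
        intro y hy
        rcases List.mem_cons.1 hy with rfl | hy
        · exact le_rfl
        · exact le_of_lt ((List.pairwise_cons.1 hsort').1 y hy)
      have hc0 : (0:ℝ) ≤ x₂ - x₁ := by linarith
      set c : ℝ := x₂ - x₁ with hc
      set I : W → ℝ := Set.indicator {w | X w > x₁} (fun _ => 1) with hI
      set Y : W → ℝ := fun w => max (X w) x₂ with hY
      have hXcases : ∀ w, X w = x₁ ∨ x₂ ≤ X w := by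
        intro w
        rcases List.mem_cons.1 (hmem w) with h | h
        · exact Or.inl h
        · exact Or.inr (hge _ h)
      have hIval : ∀ w, (X w = x₁ ∧ I w = 0 ∧ Y w = x₂) ∨
          (x₂ ≤ X w ∧ I w = 1 ∧ Y w = X w) := by
        intro w
        rcases hXcases w with h | h
        · refine Or.inl ⟨h, ?_, ?_⟩
          · simp [hI, Set.indicator_apply, Set.mem_setOf_eq, h]
          · simp [hY, h, le_of_lt h12]
        · refine Or.inr ⟨h, ?_, ?_⟩
          · have hgt : X w > x₁ := lt_of_lt_of_le h12 h
            simp [hI, Set.indicator_apply, Set.mem_setOf_eq, hgt]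
          · simp [hY, max_eq_left h]
      have hmono2 : ∀ w w', X w ≤ X w' → Y w ≤ Y w' ∧ c * I w ≤ c * I w' := by
        intro w w' h
        constructor
        · exact max_le_max h le_rfl
        · apply mul_le_mul_of_nonneg_left _ hc0
          rcases hIval w with ⟨_, hI0, _⟩ | ⟨hx, hI1, _⟩
          · rcases hIval w' with ⟨_, hI0', _⟩ | ⟨_, hI1', _⟩
            · simp [hI0, hI0']
            · simp [hI0, hI1']
          · have hx' : x₂ ≤ X w' := le_trans hx h
            rcases hIval w' with ⟨he, _, _⟩ | ⟨_, hI1', _⟩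
            · exfalso; rw [he] at hx'; linarith
            · simp [hI1, hI1']
      have hcom : E (Y + fun w => c * I w) = E Y + E (fun w => c * I w) := by
        apply hcomon
        intro w w'
        rcases le_total (X w) (X w') with h | h
        · obtain ⟨h1, h2⟩ := hmono2 w w' h
          have : (Y w - Y w') * (c * I w - c * I w') ≥ 0 := by nlinarith
          simpa using this
        · obtain ⟨h1, h2⟩ := hmono2 w' w h
          exact mul_nonneg (by linarith) (by linarith)
      have hsum : (Y + fun w => c * I w) = fun w => X w + c := by
        funext w
        show Y w + c * I w = X w + c
        rcases hIval w with ⟨h, hI0, hY0⟩ | ⟨h, hI1, hY1⟩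
        · rw [hI0, hY0, h, hc]; ring
        · rw [hI1, hY1]; ring
      have hEX : E X = E Y + c * E I - c := by
        have ha := haff X 1 c zero_le_one
        simp only [one_mul] at ha
        have hz := haff I c 0 hc0
        simp only [add_zero] at hz
        have h' : E (fun w => X w + c) = E Y + c * E I := by
          rw [← hsum, hcom, hz]
        rw [ha] at h'
        linarith
      have hYmem : ∀ w, Y w ∈ x₂ :: rest := by
        intro w
        rcases hIval w with ⟨_, _, hY0⟩ | ⟨h2, _, hY1⟩
        · rw [hY0]; exact List.mem_cons_self
        · rw [hY1]
          rcases List.mem_cons.1 (hmem w) with h | h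
          · exfalso; rw [h] at h2; linarith
          · exact h
      have hYsurj : ∀ x ∈ x₂ :: rest, ∃ w, Y w = x := by
        intro x hx
        obtain ⟨w, hw⟩ := hsurj x (List.mem_cons_of_mem _ hx)
        exact ⟨w, by simp [hY, hw, max_eq_left (hge x hx)]⟩
      have hEY := ih hsort' Y hYmem hYsurj
      have hsets : ∀ p ∈ (x₂ :: rest).zip rest, {w | Y w > p.1} = {w | X w > p.1} := by
        intro p hp
        have hp1 : x₂ ≤ p.1 := hge p.1 (List.of_mem_zip hp).1
        ext w
        simp only [Set.mem_setOf_eq, hY, gt_iff_lt, lt_max_iff]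
        constructor
        · rintro (h | h)
          · exact h
          · linarith
        · exact Or.inl
      simp only [List.tail_cons] at hEY
      rw [List.map_congr_left (fun p hp => by rw [hsets p hp])] at hEY
      simp only [List.headI_cons, List.tail_cons, List.zip_cons_cons, List.map_cons,
        List.sum_cons] at hEY ⊢
      rw [hEX, hEY, hI, hc]
      ring

private lemma choquet_indicator {W : Type*} [Fintype W] [Nonempty W] (ν : Set W → ℝ)
    (h0 : ν ∅ = 0) (h1 : ν Set.univ = 1) (U : Set W) :
    choquet ν (Set.indicator U (fun _ => 1)) = ν U := by
  classical
  by_cases hU : U = Set.univ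
  · subst hU
    rw [Set.indicator_univ]
    have himg : Finset.univ.image (fun _ : W => (1:ℝ)) = {1} :=
      Finset.image_const Finset.univ_nonempty 1
    have hsort : ({1} : Finset ℝ).sort (· ≤ ·) = [1] :=
      sort_eq_of_sorted_lt (List.pairwise_singleton _ 1) (by simp)
    simp [choquet, himg, hsort, h1]
  · by_cases hU0 : U = ∅
    · subst hU0
      rw [Set.indicator_empty]
      have himg : Finset.univ.image (fun _ : W => (0:ℝ)) = {0} :=
        Finset.image_const Finset.univ_nonempty 0
      have hsort : ({0} : Finset ℝ).sort (· ≤ ·) = [0] :=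
        sort_eq_of_sorted_lt (List.pairwise_singleton _ 0) (by simp)
      have : Set.indicator (∅ : Set W) (fun _ => (1:ℝ)) = fun _ => 0 := by simp
      simp [choquet, himg, hsort, h0, this]
    · have himg : Finset.univ.image (Set.indicator U (fun _ => (1:ℝ))) = {0, 1} := by
        ext x
        simp only [Finset.mem_image, Finset.mem_univ, true_and, Finset.mem_insert,
          Finset.mem_singleton]
        constructor
        · rintro ⟨w, rfl⟩
          by_cases h : w ∈ U <;> simp [Set.indicator_apply, h]
        · rintro (rfl | rfl)
          · obtain ⟨b, hb⟩ := (Set.ne_univ_iff_exists_notMem U).1 hU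
            exact ⟨b, by simp [Set.indicator_apply, hb]⟩
          · obtain ⟨a, ha⟩ := Set.nonempty_iff_ne_empty.2 hU0
            exact ⟨a, by simp [Set.indicator_apply, ha]⟩
      have hsort : ({0, 1} : Finset ℝ).sort (· ≤ ·) = [0, 1] := by
        refine sort_eq_of_sorted_lt ?_ (by simp)
        simp [List.pairwise_cons]
      have hset : {w | Set.indicator U (fun _ => (1:ℝ)) w > 0} = U := by
        ext w
        by_cases h : w ∈ U <;> simp [Set.indicator_apply, h]
      simp [choquet, himg, hsort, hset]

theorem stmt_10 {W : Type*} [Fintype W] [Nonempty W] (E : (W → ℝ) → ℝ)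
    (haff : ∀ (X : W → ℝ) (a b : ℝ), 0 ≤ a → E (fun w => a * X w + b) = a * E X + b)
    (hmono : ∀ X Y : W → ℝ, (∀ w, X w ≤ Y w) → E X ≤ E Y)
    (hcomon : ∀ X Y : W → ℝ,
      (∀ w w', (X w - X w') * (Y w - Y w') ≥ 0) → E (X + Y) = E X + E Y)
    (hmax : ∀ U V : Set W,
      E (Set.indicator (U ∪ V) (fun _ => (1 : ℝ))) =
        max (E (Set.indicator U (fun _ => (1 : ℝ))))
            (E (Set.indicator V (fun _ => (1 : ℝ))))) :
    ∃! Poss : Set W → ℝ,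
      (Poss ∅ = 0 ∧ Poss Set.univ = 1 ∧ (∀ U, 0 ≤ Poss U ∧ Poss U ≤ 1) ∧
        ∀ U V : Set W, Poss (U ∪ V) = max (Poss U) (Poss V)) ∧
      ∀ X : W → ℝ, E X = choquet Poss X := by
  classical
  have hconst : ∀ b : ℝ, E (fun _ => b) = b := by
    intro b
    have h := haff (fun _ => 0) 0 b le_rfl
    simpa using h
  refine ⟨fun U => E (Set.indicator U (fun _ => 1)), ⟨⟨?_, ?_, ?_, ?_⟩, ?_⟩, ?_⟩
  · show E (Set.indicator (∅ : Set W) (fun _ => 1)) = 0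
    have h : Set.indicator (∅ : Set W) (fun _ => (1:ℝ)) = fun _ => 0 := by simp
    rw [h]; exact hconst 0
  · show E (Set.indicator (Set.univ : Set W) (fun _ => 1)) = 1
    rw [Set.indicator_univ]; exact hconst 1
  · intro U
    constructor
    · calc (0:ℝ) = E (fun _ => 0) := (hconst 0).symm
        _ ≤ E (Set.indicator U (fun _ => 1)) := by
            apply hmono
            intro w
            exact Set.indicator_apply_nonneg (fun _ => zero_le_one)
    · calc E (Set.indicator U (fun _ => (1:ℝ))) ≤ E (fun _ => 1) := by
            apply hmono
            intro w
            by_cases h : w ∈ U <;> simp [Set.indicator_apply, h]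
        _ = 1 := hconst 1
  · exact hmax
  · intro X
    have h1 : ∀ w, X w ∈ (Finset.univ.image X).sort (· ≤ ·) := by
      intro w
      rw [Finset.mem_sort]
      exact Finset.mem_image_of_mem X (Finset.mem_univ w)
    have h2 : ∀ x ∈ (Finset.univ.image X).sort (· ≤ ·), ∃ w, X w = x := by
      intro x hx
      rw [Finset.mem_sort] at hx
      obtain ⟨w, _, hw⟩ := Finset.mem_image.1 hx
      exact ⟨w, hw⟩
    exact key E haff hcomon _ (Finset.sortedLT_sort _).pairwise X h1 h2
  · rintro ν ⟨⟨h0, h1, _, _⟩, hrep⟩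
    funext U
    show ν U = E (Set.indicator U (fun _ => 1))
    rw [hrep (Set.indicator U (fun _ => 1)), choquet_indicator ν h0 h1 U]
end

section
/- For a mass function m on a finite set W (m : 2^W → [0,1] with m(∅)=0 and Σ_{U⊆W} m(U)=1), the function Bel_m defined by Bel_m(U) = Σ_{V⊆U} m(V) is a belief function: Bel_m(∅)=0, Bel_m(W)=1, and for all U_1,...,U_n ⊆ W, Bel_m(∪_i U_i) ≥ Σ_{∅≠I⊆{1,...,n}} (−1)^{|I|+1} Bel_m(∩_{j∈I} U_j). -/
/-- The belief function associated to a mass function `m`: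
`Bel_m(U) = Σ_{V ⊆ U} m(V)`. -/
noncomputable def Belm {W : Type*} [Fintype W] [DecidableEq W]
    (m : Finset W → ℝ) (U : Finset W) : ℝ :=
  ∑ V ∈ Finset.univ.filter (fun V : Finset W => V ⊆ U), m V

lemma aux_pow_sum {α : Type*} [DecidableEq α] (S : Finset α) :
    (∑ I ∈ S.powerset, if I.Nonempty then (-1 : ℝ) ^ (I.card + 1) else 0)
      = if S.Nonempty then 1 else 0 := by
  have h : ∀ I : Finset α,
      (if I.Nonempty then (-1 : ℝ) ^ (I.card + 1) else 0)
        = -(-1 : ℝ) ^ I.card + (if I = ∅ then 1 else 0) := by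
    intro I
    rcases I.eq_empty_or_nonempty with h | h
    · simp [h]
    · rw [if_pos h, if_neg h.ne_empty, pow_succ]
      ring
  have hz : (∑ I ∈ S.powerset, (-1 : ℝ) ^ I.card) = if S = ∅ then 1 else 0 := by
    exact_mod_cast congrArg (Int.cast : ℤ → ℝ)
      (Finset.sum_powerset_neg_one_pow_card (x := S))
  rw [Finset.sum_congr rfl fun I _ => h I, Finset.sum_add_distrib,
    Finset.sum_neg_distrib, hz, Finset.sum_ite_eq' S.powerset ∅ (fun _ => (1:ℝ)),
    if_pos (Finset.empty_mem_powerset S)]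
  rcases S.eq_empty_or_nonempty with h | h
  · simp [h]
  · simp [h.ne_empty, h]

theorem stmt_14 {W : Type*} [Fintype W] [Nonempty W] [DecidableEq W]
    (m : Finset W → ℝ) (hm0 : m ∅ = 0) (hmpos : ∀ U, 0 ≤ m U)
    (hmsum : ∑ U : Finset W, m U = 1) :
    Belm m ∅ = 0 ∧ Belm m Finset.univ = 1 ∧
      ∀ (n : ℕ) (U : Fin n → Finset W),
        Belm m (Finset.univ.biUnion U) ≥
          ∑ I : Finset (Fin n),
            if I.Nonempty then (-1 : ℝ) ^ (I.card + 1) * Belm m (I.inf U) else 0 := by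
  refine ⟨?_, ?_, ?_⟩
  · have h : Finset.univ.filter (fun V : Finset W => V ⊆ (∅ : Finset W)) = {∅} := by
      ext V; simp [Finset.subset_empty]
    rw [Belm, h, Finset.sum_singleton, hm0]
  · have h : Finset.univ.filter (fun V : Finset W => V ⊆ (Finset.univ : Finset W))
        = Finset.univ := by
      ext V; simp
    rw [Belm, h, hmsum]
  · intro n U
    rw [ge_iff_le]
    set S : Finset W → Finset (Fin n) :=
      fun V => Finset.univ.filter (fun j => V ⊆ U j) with hS
    have key : (∑ I : Finset (Fin n),
        if I.Nonempty then (-1 : ℝ) ^ (I.card + 1) * Belm m (I.inf U) else 0)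
        = ∑ V ∈ Finset.univ.filter (fun V : Finset W => (S V).Nonempty), m V := by
      have step1 : ∀ I : Finset (Fin n),
          (if I.Nonempty then (-1 : ℝ) ^ (I.card + 1) * Belm m (I.inf U) else 0)
            = ∑ V : Finset W,
              (if I.Nonempty then (-1 : ℝ) ^ (I.card + 1) else 0) *
                (if I ⊆ S V then m V else 0) := by
        intro I
        rcases I.eq_empty_or_nonempty with h | h
        · simp [h]
        · rw [if_pos h, Belm, Finset.sum_filter, Finset.mul_sum]
          refine Finset.sum_congr rfl fun V _ => ?_
          rw [if_pos h]
          have hiff : V ⊆ I.inf U ↔ I ⊆ S V := by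
            constructor
            · intro hh j hj
              simp only [hS, Finset.mem_filter, Finset.mem_univ, true_and]
              exact hh.trans (Finset.inf_le hj)
            · intro hh
              show V ≤ I.inf U
              refine Finset.le_inf fun j hj => ?_
              have := hh hj
              simp only [hS, Finset.mem_filter, Finset.mem_univ, true_and] at this
              exact this
          by_cases hc : V ⊆ I.inf U
          · rw [if_pos hc, if_pos (hiff.mp hc)]
          · rw [if_neg hc, if_neg (fun hh => hc (hiff.mpr hh))]
      rw [Finset.sum_congr rfl fun I _ => step1 I, Finset.sum_comm]
      rw [Finset.sum_filter]
      refine Finset.sum_congr rfl fun V _ => ?_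
      have : (∑ I : Finset (Fin n),
          (if I.Nonempty then (-1 : ℝ) ^ (I.card + 1) else 0) *
            (if I ⊆ S V then m V else 0))
          = (∑ I ∈ (S V).powerset, if I.Nonempty then (-1 : ℝ) ^ (I.card + 1) else 0)
              * m V := by
        rw [Finset.sum_mul]
        rw [← Finset.sum_filter_add_sum_filter_not Finset.univ (fun I => I ⊆ S V)]
        have h2 : (∑ I ∈ Finset.univ.filter (fun I : Finset (Fin n) => ¬ I ⊆ S V),
            (if I.Nonempty then (-1 : ℝ) ^ (I.card + 1) else 0) *
              (if I ⊆ S V then m V else 0)) = 0 := by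
          refine Finset.sum_eq_zero fun I hI => ?_
          simp only [Finset.mem_filter] at hI
          rw [if_neg hI.2, mul_zero]
        rw [h2, add_zero]
        have h3 : (S V).powerset = Finset.univ.filter (fun I : Finset (Fin n) => I ⊆ S V) := by
          ext I; simp
        rw [h3]
        refine Finset.sum_congr rfl fun I hI => ?_
        simp only [Finset.mem_filter] at hI
        rw [if_pos hI.2]
      rw [this, aux_pow_sum]
      by_cases h : (S V).Nonempty
      · rw [if_pos h, if_pos h, one_mul]
      · rw [if_neg h, if_neg h, zero_mul]
    rw [key, Belm]
    refine Finset.sum_le_sum_of_subset_of_nonneg ?_ (fun V _ _ => hmpos V)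
    intro V hV
    simp only [Finset.mem_filter, Finset.mem_univ, true_and] at hV ⊢
    obtain ⟨j, hj⟩ := hV
    simp only [hS, Finset.mem_filter, Finset.mem_univ, true_and] at hj
    exact hj.trans (Finset.subset_biUnion_of_mem U (Finset.mem_univ j))
end

section
/- Let Bel be a belief function on a finite set W with associated mass function m (so that Bel(U) = Σ_{V⊆U} m(V)). Then for every gamble X, the Choquet expectation of X with respect to Bel equals Σ_{U⊆W, U≠∅} m(U) · min_{w∈U} X(w). -/
open Finset

/-- The Choquet expectation of a gamble `X` with respect to a set function `ν` on
subsets (represented as finsets), computed from the sorted image `x_1 < ... < x_n`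
of `X` as `x_1 + Σ_{i≥2} (x_i - x_{i-1}) ν(X > x_{i-1})`. -/
noncomputable def choquetF {W : Type*} [Fintype W] (ν : Finset W → ℝ) (X : W → ℝ) : ℝ :=
  let l := (Finset.univ.image X).sort (· ≤ ·)
  l.headI + ((l.zip l.tail).map
    (fun p => (p.2 - p.1) * ν (Finset.univ.filter (fun w => X w > p.1)))).sum

/-- Sum over list of finset-sums commutes. -/
lemma list_sum_map_sum {α β : Type*} (L : List α) (s : Finset β) (g : β → α → ℝ) :
    (L.map (fun p => ∑ U ∈ s, g U p)).sum = ∑ U ∈ s, (L.map (g U)).sum := by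
  induction L with
  | nil => simp
  | cons a t ih => simp [ih, Finset.sum_add_distrib]

lemma zip_sum_zero (l : List ℝ) (y : ℝ) (h : ∀ a ∈ l, ¬ a < y) :
    ((l.zip l.tail).map
      (fun p : ℝ × ℝ => (p.2 - p.1) * (if p.1 < y then (1:ℝ) else 0))).sum = 0 := by
  induction l with
  | nil => simp
  | cons a t ih =>
    cases t with
    | nil => simp
    | cons b t' =>
      have h1 : ¬ a < y := h a (by simp)
      have h2 : ∀ x ∈ b :: t', ¬ x < y := fun x hx => h x (List.mem_cons_of_mem _ hx)
      simp only [List.tail_cons, List.zip_cons_cons, List.map_cons, List.sum_cons]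
      have := ih h2
      simp only [List.tail_cons] at this
      rw [if_neg h1, mul_zero, zero_add]
      exact this

lemma zip_telescope (l : List ℝ) (hs : l.Pairwise (· < ·)) (y : ℝ) (hy : y ∈ l) :
    ((l.zip l.tail).map
      (fun p : ℝ × ℝ => (p.2 - p.1) * (if p.1 < y then (1:ℝ) else 0))).sum
      = y - l.headI := by
  induction l with
  | nil => simp at hy
  | cons a t ih =>
    cases t with
    | nil =>
      simp only [List.mem_singleton] at hy
      simp [hy]
    | cons b t' =>
      have hlt : ∀ x ∈ b :: t', a < x := (List.pairwise_cons.mp hs).1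
      rcases List.mem_cons.mp hy with heq | hy'
      · -- y = a : sum is zero
        subst heq
        have hz := zip_sum_zero (y :: b :: t') y
          (by
            intro x hx
            rcases List.mem_cons.mp hx with heq2 | hx'
            · subst heq2; exact lt_irrefl x
            · exact not_lt.mpr (le_of_lt (hlt x hx')))
        rw [hz]
        simp
      · have ha : a < y := hlt y hy'
        have ihv := ih (List.pairwise_cons.mp hs).2 hy'
        simp only [List.headI, List.tail_cons] at ihv
        simp only [List.tail_cons, List.zip_cons_cons, List.map_cons, List.sum_cons]
        rw [if_pos ha, mul_one, ihv]
        simp only [List.headI]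
        ring

theorem stmt_15 {W : Type*} [Fintype W] [Nonempty W] [DecidableEq W]
    (m : Finset W → ℝ) (hm0 : m ∅ = 0) (hmpos : ∀ U, 0 ≤ m U)
    (hmsum : ∑ U : Finset W, m U = 1)
    (Bel : Finset W → ℝ)
    (hBel : ∀ U, Bel U = ∑ V ∈ Finset.univ.filter (fun V : Finset W => V ⊆ U), m V)
    (X : W → ℝ) :
    choquetF Bel X = ∑ U : Finset W, if h : U.Nonempty then m U * U.inf' h X else 0 := by
  classical
  unfold choquetF
  set l := (Finset.univ.image X).sort (· ≤ ·) with hl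
  have hsort : l.Pairwise (· < ·) := (Finset.sortedLT_sort _).pairwise
  -- rewrite Bel inside
  have hstep1 : ∀ p : ℝ × ℝ,
      (p.2 - p.1) * Bel (Finset.univ.filter (fun w => X w > p.1))
      = ∑ U : Finset W, (m U * ((p.2 - p.1) *
          (if U ⊆ Finset.univ.filter (fun w => X w > p.1) then (1:ℝ) else 0))) := by
    intro p
    rw [hBel, Finset.sum_filter, Finset.mul_sum]
    refine Finset.sum_congr rfl fun U _ => ?_
    by_cases h : U ⊆ Finset.univ.filter (fun w => X w > p.1) <;> simp [h] <;> ring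
  simp only [hstep1]
  rw [list_sum_map_sum]
  have hterm : ∀ U : Finset W,
      ((l.zip l.tail).map (fun p : ℝ × ℝ => m U * ((p.2 - p.1) *
          (if U ⊆ Finset.univ.filter (fun w => X w > p.1) then (1:ℝ) else 0)))).sum
      = if h : U.Nonempty then m U * (U.inf' h X - l.headI) else 0 := by
    intro U
    by_cases hU : U.Nonempty
    · rw [dif_pos hU]
      have hiff : ∀ p : ℝ × ℝ,
          (U ⊆ Finset.univ.filter (fun w => X w > p.1)) ↔ p.1 < U.inf' hU X := by
        intro p
        rw [Finset.lt_inf'_iff]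
        constructor
        · intro h w hw
          exact (Finset.mem_filter.mp (h hw)).2
        · intro h w hw
          exact Finset.mem_filter.mpr ⟨Finset.mem_univ w, h w hw⟩
      have hrw : (fun p : ℝ × ℝ => m U * ((p.2 - p.1) *
          (if U ⊆ Finset.univ.filter (fun w => X w > p.1) then (1:ℝ) else 0)))
          = fun p : ℝ × ℝ => m U * ((p.2 - p.1) *
          (if p.1 < U.inf' hU X then (1:ℝ) else 0)) := by
        funext p
        rw [if_congr (hiff p) rfl rfl]
      rw [hrw]
      have hmem : U.inf' hU X ∈ l := by
        obtain ⟨w, hw, hweq⟩ := Finset.exists_mem_eq_inf' hU X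
        rw [hl, Finset.mem_sort]
        exact hweq ▸ Finset.mem_image.mpr ⟨w, Finset.mem_univ w, rfl⟩
      have := zip_telescope l hsort (U.inf' hU X) hmem
      calc ((l.zip l.tail).map (fun p : ℝ × ℝ => m U * ((p.2 - p.1) *
            (if p.1 < U.inf' hU X then (1:ℝ) else 0)))).sum
          = m U * ((l.zip l.tail).map (fun p : ℝ × ℝ => (p.2 - p.1) *
            (if p.1 < U.inf' hU X then (1:ℝ) else 0))).sum := by
            rw [← List.sum_map_mul_left]
        _ = m U * (U.inf' hU X - l.headI) := by rw [this]
    · rw [dif_neg hU]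
      rw [Finset.not_nonempty_iff_eq_empty] at hU
      subst hU
      simp [hm0]
  rw [Finset.sum_congr rfl (fun U _ => hterm U)]
  -- now algebra
  have hsplit : ∀ U : Finset W,
      (if h : U.Nonempty then m U * (U.inf' h X - l.headI) else 0)
      = (if h : U.Nonempty then m U * U.inf' h X else 0) - m U * l.headI := by
    intro U
    by_cases hU : U.Nonempty
    · rw [dif_pos hU, dif_pos hU]; ring
    · rw [dif_neg hU, dif_neg hU]
      rw [Finset.not_nonempty_iff_eq_empty] at hU
      subst hU
      simp [hm0]
  rw [Finset.sum_congr rfl (fun U _ => hsplit U), Finset.sum_sub_distrib,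
    ← Finset.sum_mul, hmsum, one_mul]
  ring
end

section
/- Let Bel be a belief function on a finite set W with mass function m, and let 𝒫_Bel = {μ probability measure on W : μ(U) ≥ Bel(U) for all U ⊆ W}. Then for every gamble X, inf{E_μ(X) : μ ∈ 𝒫_Bel} = Σ_{U⊆W, U≠∅} m(U) · min_{w∈U} X(w), and the infimum is attained by some μ ∈ 𝒫_Bel. -/
lemma meas_sum_singletons {W : Type*} [DecidableEq W] (μ : Finset W → ℝ)
    (hadd : ∀ U V : Finset W, Disjoint U V → μ (U ∪ V) = μ U + μ V) :
    ∀ S : Finset W, μ S = ∑ w ∈ S, μ {w} := by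
  have h0 : μ ∅ = 0 := by
    have := hadd ∅ ∅ (by simp)
    simp at this
    linarith
  intro S
  induction S using Finset.induction_on with
  | empty => simpa
  | @insert a s ha ih =>
    rw [Finset.insert_eq, hadd {a} s (by simpa using ha), ih, ← Finset.insert_eq,
      Finset.sum_insert ha]

theorem stmt_16 {W : Type*} [Fintype W] [Nonempty W] [DecidableEq W]
    (m : Finset W → ℝ) (hm0 : m ∅ = 0) (hmpos : ∀ U, 0 ≤ m U)
    (hmsum : ∑ U : Finset W, m U = 1)
    (Bel : Finset W → ℝ)
    (hBel : ∀ U, Bel U = ∑ V ∈ Finset.univ.filter (fun V : Finset W => V ⊆ U), m V)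
    (X : W → ℝ) :
    IsLeast ((fun μ : Finset W → ℝ => ∑ w, μ {w} * X w) ''
        {μ : Finset W → ℝ | (∀ U, 0 ≤ μ U) ∧ μ Finset.univ = 1 ∧
          (∀ U V, Disjoint U V → μ (U ∪ V) = μ U + μ V) ∧ ∀ U, Bel U ≤ μ U})
      (∑ U : Finset W, if h : U.Nonempty then m U * U.inf' h X else 0) := by
  classical
  constructor
  · -- membership
    have hc : ∀ U : Finset W, U.Nonempty → ∃ w, w ∈ U ∧ ∀ v ∈ U, X w ≤ X v := by
      intro U hU
      obtain ⟨w, hw, h⟩ := U.exists_min_image X hU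
      exact ⟨w, hw, h⟩
    choose! c hcmem hcmin using hc
    refine ⟨fun V => ∑ U : Finset W, if c U ∈ V then m U else 0, ⟨?_, ?_, ?_, ?_⟩, ?_⟩
    · intro U
      exact Finset.sum_nonneg fun V _ => by split <;> [exact hmpos V; exact le_rfl]
    · simpa using hmsum
    · intro U V hUV
      rw [← Finset.sum_add_distrib]
      refine Finset.sum_congr rfl fun T _ => ?_
      by_cases h1 : c T ∈ U <;> by_cases h2 : c T ∈ V
      · exact absurd h2 (Finset.disjoint_left.mp hUV h1)
      all_goals simp [Finset.mem_union, h1, h2]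
    · intro U
      rw [hBel U, Finset.sum_filter]
      refine Finset.sum_le_sum fun V _ => ?_
      by_cases hVU : V ⊆ U
      · by_cases hV : V.Nonempty
        · simp [hVU, hVU (hcmem V hV)]
        · rw [Finset.not_nonempty_iff_eq_empty] at hV
          subst hV
          simp [hm0]
      · simp only [hVU, if_false]
        split <;> [exact hmpos V; exact le_rfl]
    · show (∑ w, (∑ U : Finset W, if c U ∈ ({w} : Finset W) then m U else 0) * X w) = _
      simp only [Finset.mem_singleton, Finset.sum_mul, ite_mul, zero_mul]
      rw [Finset.sum_comm]
      refine Finset.sum_congr rfl fun U _ => ?_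
      rw [Finset.sum_ite_eq Finset.univ (c U) (fun w => m U * X w)]
      simp only [Finset.mem_univ, if_true]
      by_cases hU : U.Nonempty
      · rw [dif_pos hU]
        congr 1
        exact le_antisymm (Finset.le_inf' hU X fun v hv => hcmin U hU v hv)
          (Finset.inf'_le X (hcmem U hU))
      · rw [Finset.not_nonempty_iff_eq_empty] at hU
        subst hU
        simp [hm0]
  · rintro x ⟨μ, ⟨hpos, huniv, hadd, hdom⟩, rfl⟩
    simp only
    set n := Fintype.card W with hn
    have hn0 : 0 < n := Fintype.card_pos
    set e0 : Fin n ≃ W := (Fintype.equivFin W).symm with he0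
    set e : Fin n ≃ W := (Tuple.sort (X ∘ e0)).trans e0 with he
    have hg : Monotone (fun i : Fin n => X (e i)) := Tuple.monotone_sort (X ∘ e0)
    set f : ℕ → ℝ := fun j => X (e ⟨min j (n - 1), by omega⟩) with hfdef
    have hf_mono : Monotone f := by
      intro a b hab
      simp only [hfdef]
      exact hg (Fin.mk_le_mk.mpr (by omega))
    have hfi : ∀ i : Fin n, f i.val = X (e i) := by
      intro i
      have h1 : min i.1 (n - 1) = i.1 := by have := i.isLt; omega
      simp only [hfdef, h1, Fin.eta]
    have hkey : ∀ i : Fin n,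
        X (e i) = f 0 + ∑ j ∈ Finset.range n, if j < i.val then f (j + 1) - f j else 0 := by
      intro i
      have hfil : (Finset.range n).filter (fun j => j < i.val) = Finset.range i.val := by
        have := i.isLt
        ext j
        simp only [Finset.mem_filter, Finset.mem_range]
        omega
      rw [← Finset.sum_filter, hfil, Finset.sum_range_sub f i.val]
      have := hfi i
      linarith
    set A : ℕ → Finset W := fun j => Finset.univ.filter fun w => j < (e.symm w).val with hA
    have hBelA : ∀ j, Bel (A j) = ∑ V : Finset W, if V ⊆ A j then m V else 0 := by
      intro j
      rw [hBel, Finset.sum_filter]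
    have hμA : ∀ j, (∑ i : Fin n, if j < i.val then μ {e i} else 0) = μ (A j) := by
      intro j
      rw [meas_sum_singletons μ hadd, Finset.sum_filter]
      exact Fintype.sum_equiv e _ _ (fun i => by simp [hA])
    have hE : ∑ w, μ {w} * X w = f 0 + ∑ j ∈ Finset.range n, (f (j + 1) - f j) * μ (A j) := by
      calc ∑ w, μ {w} * X w = ∑ i : Fin n, μ {e i} * X (e i) :=
            (Fintype.sum_equiv e _ _ (fun i => rfl)).symm
        _ = ∑ i : Fin n, (μ {e i} * f 0 +
              ∑ j ∈ Finset.range n, if j < i.val then (f (j + 1) - f j) * μ {e i} else 0) := by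
            refine Finset.sum_congr rfl fun i _ => ?_
            rw [hkey i, mul_add, Finset.mul_sum]
            congr 1
            refine Finset.sum_congr rfl fun j _ => ?_
            rw [mul_ite, mul_zero, mul_comm]
        _ = f 0 + ∑ j ∈ Finset.range n, (f (j + 1) - f j) * μ (A j) := by
            rw [Finset.sum_add_distrib, ← Finset.sum_mul, Finset.sum_comm]
            have h1 : ∑ i : Fin n, μ {e i} = 1 := by
              rw [Fintype.sum_equiv e _ (fun w => μ {w}) (fun i => rfl),
                ← meas_sum_singletons μ hadd, huniv]
            rw [h1, one_mul]
            congr 1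
            refine Finset.sum_congr rfl fun j _ => ?_
            rw [← hμA j, Finset.mul_sum]
            refine Finset.sum_congr rfl fun i _ => ?_
            rw [mul_ite, mul_zero]
    have hmin : ∀ (U : Finset W) (h : U.Nonempty),
        U.inf' h X = f 0 + ∑ j ∈ Finset.range n, if U ⊆ A j then f (j + 1) - f j else 0 := by
      intro U hU
      have hI : (U.image fun w => e.symm w).Nonempty := hU.image _
      set i0 := (U.image fun w => e.symm w).min' hI with hi0def
      have hi0mem : i0 ∈ U.image fun w => e.symm w := Finset.min'_mem _ _
      obtain ⟨w0, hw0U, hw0⟩ := Finset.mem_image.mp hi0mem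
      have he_i0 : e i0 ∈ U := by rw [← hw0, Equiv.apply_symm_apply]; exact hw0U
      have hle : ∀ w ∈ U, i0 ≤ e.symm w := fun w hw =>
        Finset.min'_le _ _ (Finset.mem_image_of_mem _ hw)
      have hinf : U.inf' hU X = X (e i0) := by
        refine le_antisymm (Finset.inf'_le X he_i0) (Finset.le_inf' hU X fun w hw => ?_)
        have h2 := hg (hle w hw)
        simpa using h2
      rw [hinf, hkey i0]
      congr 1
      refine Finset.sum_congr rfl fun j _ => ?_
      have hiff : j < i0.val ↔ U ⊆ A j := by
        constructor
        · intro hj w hw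
          simp only [hA, Finset.mem_filter, Finset.mem_univ, true_and]
          exact lt_of_lt_of_le hj (hle w hw)
        · intro hsub
          have h3 := hsub he_i0
          simp only [hA, Finset.mem_filter, Equiv.symm_apply_apply] at h3
          exact h3.2
      simp only [hiff]
    have hT : (∑ U : Finset W, if h : U.Nonempty then m U * U.inf' h X else 0)
        = f 0 + ∑ j ∈ Finset.range n, (f (j + 1) - f j) * Bel (A j) := by
      calc (∑ U : Finset W, if h : U.Nonempty then m U * U.inf' h X else 0)
          = ∑ U : Finset W, (m U * f 0 +
              ∑ j ∈ Finset.range n, if U ⊆ A j then (f (j + 1) - f j) * m U else 0) := by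
            refine Finset.sum_congr rfl fun U _ => ?_
            by_cases hU : U.Nonempty
            · rw [dif_pos hU, hmin U hU, mul_add, Finset.mul_sum]
              congr 1
              refine Finset.sum_congr rfl fun j _ => ?_
              rw [mul_ite, mul_zero, mul_comm]
            · rw [dif_neg hU]
              rw [Finset.not_nonempty_iff_eq_empty] at hU
              subst hU
              simp [hm0]
        _ = f 0 + ∑ j ∈ Finset.range n, (f (j + 1) - f j) * Bel (A j) := by
            rw [Finset.sum_add_distrib, ← Finset.sum_mul, hmsum, one_mul, Finset.sum_comm]
            congr 1
            refine Finset.sum_congr rfl fun j _ => ?_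
            rw [hBelA j, Finset.mul_sum]
            refine Finset.sum_congr rfl fun U _ => ?_
            rw [mul_ite, mul_zero]
    rw [hE, hT]
    refine add_le_add le_rfl (Finset.sum_le_sum fun j _ => ?_)
    exact mul_le_mul_of_nonneg_left (hdom (A j)) (sub_nonneg.mpr (hf_mono (Nat.le_succ j)))
end

section
/- Let X and Y be comonotonic gambles on a finite set W. Then there exist pairwise disjoint sets U_1,...,U_n covering W and reals a_1 ≤ ... ≤ a_n and b_1 ≤ ... ≤ b_n such that X = Σ_i a_i·1_{U_i} and Y = Σ_i b_i·1_{U_i}. -/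
theorem stmt_17 {W : Type*} [Fintype W] [Nonempty W] (X Y : W → ℝ)
    (hcom : ∀ w w', (X w - X w') * (Y w - Y w') ≥ 0) :
    ∃ (n : ℕ) (U : Fin n → Set W) (a b : Fin n → ℝ),
      (∀ i j, i ≠ j → Disjoint (U i) (U j)) ∧ (⋃ i, U i) = Set.univ ∧
      Monotone a ∧ Monotone b ∧
      (∀ w, X w = ∑ i, Set.indicator (U i) (fun _ => a i) w) ∧
      (∀ w, Y w = ∑ i, Set.indicator (U i) (fun _ => b i) w) := by
  classical
  set S : W → ℝ := fun w => X w + Y w with hS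
  have hdetX : ∀ w w', S w = S w' → X w = X w' := by
    intro w w' h; have := hcom w w'; simp only [hS] at h; nlinarith
  have hdetY : ∀ w w', S w = S w' → Y w = Y w' := by
    intro w w' h; have := hcom w w'; simp only [hS] at h; nlinarith
  have hmonX : ∀ w w', S w ≤ S w' → X w ≤ X w' := by
    intro w w' h; have := hcom w w'; simp only [hS] at h; nlinarith
  have hmonY : ∀ w w', S w ≤ S w' → Y w ≤ Y w' := by
    intro w w' h; have := hcom w w'; simp only [hS] at h; nlinarith
  set s : Finset ℝ := Finset.image S Finset.univ with hs
  set e : Fin s.card ≃o s := s.orderIsoOfFin rfl with he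
  have hpick : ∀ i : Fin s.card, ∃ w : W, S w = (e i : ℝ) := by
    intro i
    obtain ⟨w, _, hw⟩ := Finset.mem_image.mp (e i).2
    exact ⟨w, hw⟩
  choose pick hpick using hpick
  set U : Fin s.card → Set W := fun i => {w | S w = (e i : ℝ)} with hU
  refine ⟨s.card, U, fun i => X (pick i), fun i => Y (pick i), ?_, ?_, ?_, ?_, ?_, ?_⟩
  · intro i j hij
    rw [Set.disjoint_left]
    intro w hwi hwj
    apply hij
    have : (e i : ℝ) = (e j : ℝ) := by
      rw [← hwi, hwj]
    exact e.injective (Subtype.ext this)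
  · ext w
    simp only [Set.mem_iUnion, Set.mem_univ, iff_true]
    have hmem : S w ∈ s := by rw [hs]; exact Finset.mem_image_of_mem S (Finset.mem_univ w)
    refine ⟨e.symm ⟨S w, hmem⟩, ?_⟩
    show S w = _
    rw [e.apply_symm_apply]
  · intro i j hij
    exact hmonX _ _ (by rw [hpick, hpick]; exact_mod_cast e.monotone hij)
  · intro i j hij
    exact hmonY _ _ (by rw [hpick, hpick]; exact_mod_cast e.monotone hij)
  · intro w
    have hmem : S w ∈ s := by rw [hs]; exact Finset.mem_image_of_mem S (Finset.mem_univ w)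
    set i₀ : Fin s.card := e.symm ⟨S w, hmem⟩ with hi₀
    have hwi₀ : w ∈ U i₀ := by
      show S w = _
      rw [hi₀, e.apply_symm_apply]
    rw [Finset.sum_eq_single i₀]
    · rw [Set.indicator_of_mem hwi₀]
      exact hdetX _ _ (hwi₀.trans (hpick i₀).symm)
    · intro j _ hj
      apply Set.indicator_of_notMem
      intro hwj
      apply hj
      have : (e j : ℝ) = (e i₀ : ℝ) := by rw [← hwj, hwi₀]
      exact e.injective (Subtype.ext this)
    · intro h; exact absurd (Finset.mem_univ i₀) h
  · intro w
    have hmem : S w ∈ s := by rw [hs]; exact Finset.mem_image_of_mem S (Finset.mem_univ w)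
    set i₀ : Fin s.card := e.symm ⟨S w, hmem⟩ with hi₀
    have hwi₀ : w ∈ U i₀ := by
      show S w = _
      rw [hi₀, e.apply_symm_apply]
    rw [Finset.sum_eq_single i₀]
    · rw [Set.indicator_of_mem hwi₀]
      exact hdetY _ _ (hwi₀.trans (hpick i₀).symm)
    · intro j _ hj
      apply Set.indicator_of_notMem
      intro hwj
      apply hj
      have : (e j : ℝ) = (e i₀ : ℝ) := by rw [← hwj, hwi₀]
      exact e.injective (Subtype.ext this)
    · intro h; exact absurd (Finset.mem_univ i₀) h
end

section
/- If 𝒫 is a nonempty set of probability measures on a finite set W and 𝐸̲ = 𝐸̲_𝒫 is its lower expectation, then for all gambles X_1,...,X_n, nonnegative reals b_1,...,b_n, and any index i*, sup_{w∈W} [ Σ_{j≠i*} b_j(X_j(w) − 𝐸̲(X_j)) − b_{i*}(X_{i*}(w) − 𝐸̲(X_{i*})) ] ≥ 0 (i.e., lower expectations are coherent in Walley's sense). -/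
theorem stmt_18 {W : Type*} [Fintype W] [Nonempty W] (P : Set (W → ℝ))
    (hne : P.Nonempty) (hP : ∀ μ ∈ P, (∀ w, 0 ≤ μ w) ∧ ∑ w, μ w = 1)
    (n : ℕ) (X : Fin n → W → ℝ) (b : Fin n → ℝ) (hb : ∀ j, 0 ≤ b j) (i : Fin n) :
    0 ≤ Finset.univ.sup' Finset.univ_nonempty (fun w : W =>
      (∑ j ∈ Finset.univ.erase i,
        b j * (X j w - sInf ((fun μ => ∑ v, μ v * X j v) '' P)))
        - b i * (X i w - sInf ((fun μ => ∑ v, μ v * X i v) '' P))) := by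
  classical
  set c : Fin n → ℝ := fun j => sInf ((fun μ => ∑ v, μ v * X j v) '' P) with hc
  have hSne : ∀ j : Fin n, ((fun μ => ∑ v, μ v * X j v) '' P).Nonempty :=
    fun j => hne.image _
  have hbdd : ∀ j : Fin n, BddBelow ((fun μ => ∑ v, μ v * X j v) '' P) := by
    intro j
    refine ⟨Finset.univ.inf' Finset.univ_nonempty (X j), ?_⟩
    rintro x ⟨μ, hμ, rfl⟩
    obtain ⟨hpos, hsum⟩ := hP μ hμ
    calc Finset.univ.inf' Finset.univ_nonempty (X j)
        = ∑ v, μ v * Finset.univ.inf' Finset.univ_nonempty (X j) := by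
          rw [← Finset.sum_mul, hsum, one_mul]
      _ ≤ ∑ v, μ v * X j v := Finset.sum_le_sum (fun v _ =>
          mul_le_mul_of_nonneg_left (Finset.inf'_le _ (Finset.mem_univ v)) (hpos v))
  have hcle : ∀ (j : Fin n), ∀ μ ∈ P, c j ≤ ∑ v, μ v * X j v := fun j μ hμ =>
    csInf_le (hbdd j) ⟨μ, hμ, rfl⟩
  set F : W → ℝ := fun w =>
    (∑ j ∈ Finset.univ.erase i, b j * (X j w - c j)) - b i * (X i w - c i) with hF
  set s : ℝ := Finset.univ.sup' Finset.univ_nonempty F with hs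
  -- expectation of F under any μ ∈ P
  have expand : ∀ μ ∈ P, ∑ w, μ w * F w =
      (∑ j ∈ Finset.univ.erase i, b j * ((∑ v, μ v * X j v) - c j))
        - b i * ((∑ v, μ v * X i v) - c i) := by
    intro μ hμ
    obtain ⟨hpos, hsum⟩ := hP μ hμ
    have h1 : ∀ (Y : W → ℝ) (a : ℝ), ∑ w, μ w * (Y w - a) = (∑ w, μ w * Y w) - a := by
      intro Y a
      rw [show ∑ w, μ w * (Y w - a) = (∑ w, μ w * Y w) - (∑ w, μ w) * a by
        rw [Finset.sum_mul, ← Finset.sum_sub_distrib]; congr 1; ext w; ring, hsum, one_mul]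
    calc ∑ w, μ w * F w
        = (∑ w, ∑ j ∈ Finset.univ.erase i, b j * (μ w * (X j w - c j)))
            - b i * (∑ w, μ w * (X i w - c i)) := by
          have hw : ∀ w, μ w * F w =
              (∑ j ∈ Finset.univ.erase i, b j * (μ w * (X j w - c j)))
                - b i * (μ w * (X i w - c i)) := by
            intro w
            rw [hF]
            simp only []
            rw [mul_sub, Finset.mul_sum]
            congr 1
            · exact Finset.sum_congr rfl fun j _ => by ring
            · ring
          rw [Finset.sum_congr rfl fun w _ => hw w, Finset.sum_sub_distrib,
            ← Finset.mul_sum]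
      _ = (∑ j ∈ Finset.univ.erase i, b j * (∑ w, μ w * (X j w - c j)))
            - b i * (∑ w, μ w * (X i w - c i)) := by
          rw [Finset.sum_comm]
          congr 1
          exact Finset.sum_congr rfl fun j _ => (Finset.mul_sum _ _ _).symm
      _ = (∑ j ∈ Finset.univ.erase i, b j * ((∑ v, μ v * X j v) - c j))
            - b i * ((∑ v, μ v * X i v) - c i) := by
          rw [h1]
          congr 1
          exact Finset.sum_congr rfl fun j _ => by rw [h1]
  -- expectation is below the sup
  have Ele : ∀ μ ∈ P, ∑ w, μ w * F w ≤ s := by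
    intro μ hμ
    obtain ⟨hpos, hsum⟩ := hP μ hμ
    calc ∑ w, μ w * F w ≤ ∑ w, μ w * s := Finset.sum_le_sum (fun w _ =>
          mul_le_mul_of_nonneg_left (Finset.le_sup' F (Finset.mem_univ w)) (hpos w))
      _ = s := by rw [← Finset.sum_mul, hsum, one_mul]
  refine le_of_forall_pos_le_add ?_
  intro ε hε
  have hδ : 0 < ε / (b i + 1) := div_pos hε (by linarith [hb i])
  obtain ⟨x, ⟨μ, hμ, rfl⟩, hx⟩ := Real.lt_sInf_add_pos (hSne i) hδ
  have hEi : (∑ v, μ v * X i v) - c i < ε / (b i + 1) := by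
    rw [hc]; simp only []; linarith [hx]
  have hbi : b i * ((∑ v, μ v * X i v) - c i) ≤ ε := by
    have h2 : b i * ((∑ v, μ v * X i v) - c i) ≤ b i * (ε / (b i + 1)) :=
      mul_le_mul_of_nonneg_left (le_of_lt hEi) (hb i)
    have h3 : b i * (ε / (b i + 1)) ≤ ε := by
      rw [mul_div_assoc', div_le_iff₀ (by linarith [hb i])]
      nlinarith [hb i, hε.le]
    linarith
  have hterms : 0 ≤ ∑ j ∈ Finset.univ.erase i, b j * ((∑ v, μ v * X j v) - c j) :=
    Finset.sum_nonneg fun j _ =>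
      mul_nonneg (hb j) (by linarith [hcle j μ hμ])
  have := Ele μ hμ
  rw [expand μ hμ] at this
  linarith
end
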